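/- arXiv:2112.13134 — 3 statements merged into one kernel-verified Lean document; each statement's English description precedes it below -/
import Mathlib

section
/- Let μ : 𝕏 → [0,∞), let x_1 ∈ 𝕏, let n ≥ 1 and let X = {x_2,…,x_n} ⊆ 𝕏 be a finite set with x_1 ∼ x_i for all i ∈ {2,…,n}. With all sums and products evaluated in the extended nonnegative reals [0,∞], set L := 1 + ∑_{Y ⊆ Γ(x_1) finite nonempty compatible} ∏_{y ∈ Y} μ(y) ∏_{w ∈ Γ(Y)} e^{μ(w)} and L' := 1 + ∑_{Y ⊆ Γ(x_1) finite nonempty compatible, Y ∼ X} ∏_{y ∈ Y} μ(y) ∏_{w ∈ Γ(Y) ∖ Γ(X)} e^{μ(w)}. Then μ(x_1) · (∏_{w ∈ Γ(x_1)} e^{μ(w)}) · L' ≤ μ(x_1) · (∏_{w ∈ Γ(x_1) ∖ Γ(X)} e^{μ(w)}) · L (the cross-multiplied form of the ratio inequality μ(x_1)∏_{w∈Γ(x_1)}e^{μ(w)} / L ≤ μ(x_1)∏_{w∈Γ(x_1)∖Γ(X)}e^{μ(w)} / L'). -/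
open ENNReal Filter
open scoped Classical

noncomputable section

/-- The exponential function on `[0,∞]`, sending `∞` to `∞`. -/
def eexp (t : ℝ≥0∞) : ℝ≥0∞ :=
  if t = ⊤ then ⊤ else ENNReal.ofReal (Real.exp t.toReal)

lemma eexp_top : eexp ⊤ = ⊤ := if_pos rfl

lemma eexp_of_ne_top {t : ℝ≥0∞} (h : t ≠ ⊤) :
    eexp t = ENNReal.ofReal (Real.exp t.toReal) := if_neg h

lemma eexp_zero : eexp 0 = 1 := by
  simp [eexp, Real.exp_zero]

lemma one_le_eexp (t : ℝ≥0∞) : 1 ≤ eexp t := by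
  unfold eexp; split
  · exact le_top
  · rw [ENNReal.one_le_ofReal]
    exact Real.one_le_exp ENNReal.toReal_nonneg

lemma eexp_ne_zero (t : ℝ≥0∞) : eexp t ≠ 0 :=
  fun h => by simpa [h] using one_le_eexp t

lemma eexp_add (a b : ℝ≥0∞) : eexp (a + b) = eexp a * eexp b := by
  rcases eq_or_ne a ⊤ with ha | ha
  · rw [ha, top_add, eexp_top, ENNReal.top_mul (eexp_ne_zero b)]
  rcases eq_or_ne b ⊤ with hb | hb
  · rw [hb, add_top, eexp_top, ENNReal.mul_top (eexp_ne_zero a)]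
  rw [eexp_of_ne_top ha, eexp_of_ne_top hb, eexp_of_ne_top (by finiteness),
    ENNReal.toReal_add ha hb, Real.exp_add,
    ENNReal.ofReal_mul (Real.exp_nonneg _)]

lemma eexp_mono {a b : ℝ≥0∞} (h : a ≤ b) : eexp a ≤ eexp b := by
  rcases eq_or_ne b ⊤ with hb | hb
  · rw [hb, eexp_top]; exact le_top
  have ha : a ≠ ⊤ := fun h' => hb (top_le_iff.mp (h' ▸ h))
  rw [eexp_of_ne_top ha, eexp_of_ne_top hb]
  exact ENNReal.ofReal_le_ofReal (Real.exp_le_exp.mpr (ENNReal.toReal_mono hb h))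

lemma eexp_le_one_add_mul {t : ℝ≥0∞} (ht : t ≠ ⊤) : eexp t ≤ 1 + t * eexp t := by
  rw [eexp_of_ne_top ht]
  set x := t.toReal with hx
  have hx0 : 0 ≤ x := ENNReal.toReal_nonneg
  have key : Real.exp x ≤ 1 + x * Real.exp x := by
    nlinarith [Real.add_one_le_exp (-x), Real.exp_pos x,
      (by rw [← Real.exp_add]; simp : Real.exp (-x) * Real.exp x = 1)]
  have ht' : t = ENNReal.ofReal x := by rw [hx, ENNReal.ofReal_toReal ht]
  calc ENNReal.ofReal (Real.exp x) ≤ ENNReal.ofReal (1 + x * Real.exp x) :=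
        ENNReal.ofReal_le_ofReal key
    _ = 1 + ENNReal.ofReal x * ENNReal.ofReal (Real.exp x) := by
        rw [ENNReal.ofReal_add (by norm_num) (by positivity),
          ENNReal.ofReal_mul hx0, ENNReal.ofReal_one]
    _ = 1 + t * ENNReal.ofReal (Real.exp x) := by rw [← ht']

variable {P : Type}

lemma claimC (R : P → P → Prop) (hsymm : ∀ a b, R a b → R b a) (hrefl : ∀ a, R a a)
    (f : P → ℝ≥0∞) (hf : ∀ w, f w ≠ ⊤) (F : Finset P) :
    eexp (∑ w ∈ F, f w) ≤
      ∑ Y ∈ F.powerset,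
        if (∀ y ∈ Y, ∀ y' ∈ Y, y ≠ y' → ¬R y y') then
          (∏ y ∈ Y, f y) * eexp (∑ w ∈ F.filter (fun w => ∃ y ∈ Y, R w y), f w)
        else 0 := by
  induction F using Finset.strongInduction with
  | _ F IH =>
  rcases F.eq_empty_or_nonempty with rfl | ⟨s, hs⟩
  · simp [eexp_zero]
  · have hsF : s ∈ F := hs
    set F₁ := F.erase s with hF₁
    have hsF₁ : s ∉ F₁ := Finset.notMem_erase s F
    have hFi : F = insert s F₁ := (Finset.insert_erase hsF).symm
    set F₀ := F₁.filter (fun w => ¬ R w s) with hF₀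
    have hF₀₁ : F₀ ⊆ F₁ := Finset.filter_subset _ _
    have hF₁F : F₁ ⊆ F := Finset.erase_subset s F
    have hF₁lt : F₁ ⊂ F := Finset.erase_ssubset hsF
    have hF₀lt : F₀ ⊂ F := lt_of_le_of_lt hF₀₁ hF₁lt
    -- sums are finite
    have hsum_ne_top : ∀ G : Finset P, (∑ w ∈ G, f w) ≠ ⊤ := by
      intro G
      exact (ENNReal.sum_lt_top.mpr (fun w _ => (hf w).lt_top)).ne
    -- split the powerset sum
    rw [hFi, Finset.sum_powerset_insert hsF₁]
    -- part 1
    have part1 : eexp (∑ w ∈ F₁, f w) ≤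
        ∑ Y ∈ F₁.powerset,
          if (∀ y ∈ Y, ∀ y' ∈ Y, y ≠ y' → ¬R y y') then
            (∏ y ∈ Y, f y) *
              eexp (∑ w ∈ (insert s F₁).filter (fun w => ∃ y ∈ Y, R w y), f w)
          else 0 := by
      refine le_trans (IH F₁ hF₁lt) (Finset.sum_le_sum fun Y hY => ?_)
      split
      · refine mul_le_mul_right (eexp_mono (Finset.sum_le_sum_of_subset ?_)) _
        exact Finset.filter_subset_filter _ (by rw [← hFi]; exact hF₁F)
      · exact le_rfl
    -- part 2
    have part2 : f s * eexp (∑ w ∈ F, f w) ≤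
        ∑ Y ∈ F₁.powerset,
          if (∀ y ∈ insert s Y, ∀ y' ∈ insert s Y, y ≠ y' → ¬R y y') then
            (∏ y ∈ insert s Y, f y) *
              eexp (∑ w ∈ (insert s F₁).filter (fun w => ∃ y ∈ insert s Y, R w y), f w)
          else 0 := by
      have hsub : F₀.powerset ⊆ F₁.powerset := Finset.powerset_mono.mpr hF₀₁
      refine le_trans ?_ (Finset.sum_le_sum_of_subset hsub)
      -- key termwise bound over F₀.powerset
      have key : ∀ Y ∈ F₀.powerset,
          f s * eexp (∑ w ∈ F.filter (fun w => R w s), f w) *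
            (if (∀ y ∈ Y, ∀ y' ∈ Y, y ≠ y' → ¬R y y') then
              (∏ y ∈ Y, f y) * eexp (∑ w ∈ F₀.filter (fun w => ∃ y ∈ Y, R w y), f w)
            else 0)
          ≤ (if (∀ y ∈ insert s Y, ∀ y' ∈ insert s Y, y ≠ y' → ¬R y y') then
              (∏ y ∈ insert s Y, f y) *
                eexp (∑ w ∈ (insert s F₁).filter (fun w => ∃ y ∈ insert s Y, R w y), f w)
            else 0) := by
        intro Y hY
        rw [Finset.mem_powerset] at hY
        by_cases hcomp : ∀ y ∈ Y, ∀ y' ∈ Y, y ≠ y' → ¬R y y'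
        · have hsY : s ∉ Y := fun h => by
            have := hY h
            rw [hF₀, Finset.mem_filter] at this
            exact this.2 (hrefl s)
          have hF₀s : ∀ y ∈ Y, ¬ R y s := fun y hy => (Finset.mem_filter.mp (hY hy)).2
          have hcomp' : ∀ y ∈ insert s Y, ∀ y' ∈ insert s Y, y ≠ y' → ¬R y y' := by
            intro y hy y' hy' hne
            rcases Finset.mem_insert.mp hy with hy1 | hy1 <;>
              rcases Finset.mem_insert.mp hy' with hy2 | hy2
            · exact absurd (hy1.trans hy2.symm) hne
            · rw [hy1]; exact fun h => hF₀s y' hy2 (hsymm _ _ h)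
            · rw [hy2]; exact hF₀s y hy1
            · exact hcomp y hy1 y' hy2 hne
          rw [if_pos hcomp, if_pos hcomp', Finset.prod_insert hsY]
          -- exponent bound
          have hdisj : Disjoint (F.filter (fun w => R w s))
              (F₀.filter (fun w => ∃ y ∈ Y, R w y)) := by
            rw [Finset.disjoint_left]
            intro w hw hw'
            exact (Finset.mem_filter.mp (Finset.filter_subset _ _ hw' : w ∈ F₀)).2
              (Finset.mem_filter.mp hw).2
          have hunion_sub : (F.filter (fun w => R w s)) ∪
              (F₀.filter (fun w => ∃ y ∈ Y, R w y)) ⊆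
              (insert s F₁).filter (fun w => ∃ y ∈ insert s Y, R w y) := by
            intro w hw
            rw [← hFi]
            rcases Finset.mem_union.mp hw with hw | hw
            · rw [Finset.mem_filter] at hw ⊢
              exact ⟨hw.1, s, Finset.mem_insert_self _ _, hw.2⟩
            · rw [Finset.mem_filter] at hw ⊢
              obtain ⟨y, hy, hry⟩ := hw.2
              exact ⟨hF₁F (hF₀₁ hw.1), y, Finset.mem_insert_of_mem hy, hry⟩
          have hexp : eexp (∑ w ∈ F.filter (fun w => R w s), f w) *
              eexp (∑ w ∈ F₀.filter (fun w => ∃ y ∈ Y, R w y), f w) ≤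
              eexp (∑ w ∈ (insert s F₁).filter (fun w => ∃ y ∈ insert s Y, R w y), f w) := by
            rw [← eexp_add, ← Finset.sum_union hdisj]
            exact eexp_mono (Finset.sum_le_sum_of_subset hunion_sub)
          calc f s * eexp (∑ w ∈ F.filter (fun w => R w s), f w) *
                ((∏ y ∈ Y, f y) * eexp (∑ w ∈ F₀.filter (fun w => ∃ y ∈ Y, R w y), f w))
              = (f s * ∏ y ∈ Y, f y) *
                (eexp (∑ w ∈ F.filter (fun w => R w s), f w) *
                  eexp (∑ w ∈ F₀.filter (fun w => ∃ y ∈ Y, R w y), f w)) := by ring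
            _ ≤ (f s * ∏ y ∈ Y, f y) *
                eexp (∑ w ∈ (insert s F₁).filter (fun w => ∃ y ∈ insert s Y, R w y), f w) :=
              mul_le_mul_right hexp _
        · rw [if_neg hcomp, mul_zero]
          exact zero_le
      have step : f s * eexp (∑ w ∈ F.filter (fun w => R w s), f w) *
          (∑ Y ∈ F₀.powerset,
            if (∀ y ∈ Y, ∀ y' ∈ Y, y ≠ y' → ¬R y y') then
              (∏ y ∈ Y, f y) * eexp (∑ w ∈ F₀.filter (fun w => ∃ y ∈ Y, R w y), f w)
            else 0) ≤
          ∑ Y ∈ F₀.powerset,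
          if (∀ y ∈ insert s Y, ∀ y' ∈ insert s Y, y ≠ y' → ¬R y y') then
            (∏ y ∈ insert s Y, f y) *
              eexp (∑ w ∈ (insert s F₁).filter (fun w => ∃ y ∈ insert s Y, R w y), f w)
          else 0 := by
        rw [Finset.mul_sum]
        exact Finset.sum_le_sum key
      refine le_trans ?_ step
      -- now use IH on F₀ and recombine exponentials
      have hIH := IH F₀ hF₀lt
      have : f s * eexp (∑ w ∈ F.filter (fun w => R w s), f w) * eexp (∑ w ∈ F₀, f w) ≤
          f s * eexp (∑ w ∈ F.filter (fun w => R w s), f w) *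
          (∑ Y ∈ F₀.powerset,
            if (∀ y ∈ Y, ∀ y' ∈ Y, y ≠ y' → ¬R y y') then
              (∏ y ∈ Y, f y) * eexp (∑ w ∈ F₀.filter (fun w => ∃ y ∈ Y, R w y), f w)
            else 0) := mul_le_mul_right hIH _
      refine le_trans (le_of_eq ?_) this
      have hF0eq : F.filter (fun w => ¬ R w s) = F₀ := by
        rw [hF₀, hF₁]
        ext w
        simp only [Finset.mem_filter, Finset.mem_erase]
        constructor
        · rintro ⟨hw, hn⟩
          exact ⟨⟨fun he => hn (he ▸ hrefl s), hw⟩, hn⟩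
        · rintro ⟨⟨_, hw⟩, hn⟩; exact ⟨hw, hn⟩
      have hsum_split : ∑ w ∈ F.filter (fun w => R w s), f w + ∑ w ∈ F₀, f w
          = ∑ w ∈ F, f w := by
        conv_rhs => rw [← Finset.sum_filter_add_sum_filter_not F (fun w => R w s) f]
        rw [hF0eq]
      rw [mul_assoc, ← eexp_add, hsum_split]
    -- combine
    calc eexp (∑ w ∈ insert s F₁, f w) = eexp (f s) * eexp (∑ w ∈ F₁, f w) := by
          rw [Finset.sum_insert hsF₁, eexp_add]
      _ ≤ (1 + f s * eexp (f s)) * eexp (∑ w ∈ F₁, f w) :=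
          mul_le_mul_left (eexp_le_one_add_mul (hf s)) _
      _ = eexp (∑ w ∈ F₁, f w) + f s * eexp (∑ w ∈ insert s F₁, f w) := by
          rw [Finset.sum_insert hsF₁, eexp_add]; ring
      _ ≤ _ := add_le_add part1 (by rw [hFi] at part2; exact part2)


lemma sum_le_tsum_set (f : P → ℝ≥0∞) {G : Finset P} {s : Set P} (h : ∀ x ∈ G, x ∈ s) :
    ∑ w ∈ G, f w ≤ ∑' w : s, f w := by
  rw [← Finset.tsum_subtype]
  refine tsum_comp_le_tsum_of_injective
    (f := fun x : {x // x ∈ G} => (⟨x.1, h x.1 x.2⟩ : s))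
    (fun a b hab => ?_) (fun y : s => f y)
  simp only [Subtype.mk.injEq] at hab
  exact Subtype.ext hab

lemma claimB (R : P → P → Prop) (hsymm : ∀ a b, R a b → R b a) (hrefl : ∀ a, R a a)
    (f : P → ℝ≥0∞) (hf : ∀ w, f w ≠ ⊤) (Q : Set P) :
    eexp (∑' w : Q, f w) ≤
      ∑' Y : Finset P,
        if (∀ y ∈ Y, y ∈ Q) ∧ (∀ y ∈ Y, ∀ y' ∈ Y, y ≠ y' → ¬R y y') then
          (∏ y ∈ Y, f y) * eexp (∑' w : (Q ∩ {w | ∃ y ∈ Y, R w y} : Set P), f w)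
        else 0 := by
  set tb : Finset P → ℝ≥0∞ := fun Y =>
    if (∀ y ∈ Y, y ∈ Q) ∧ (∀ y ∈ Y, ∀ y' ∈ Y, y ≠ y' → ¬R y y') then
      (∏ y ∈ Y, f y) * eexp (∑' w : (Q ∩ {w | ∃ y ∈ Y, R w y} : Set P), f w)
    else 0 with htb
  set B := ∑' Y : Finset P, tb Y with hB
  have hfin : ∀ F : Finset P, (∀ x ∈ F, x ∈ Q) → eexp (∑ w ∈ F, f w) ≤ B := by
    intro F hFQ
    refine le_trans (claimC R hsymm hrefl f hf F) ?_
    refine le_trans (Finset.sum_le_sum (g := tb) fun Y hY => ?_) (ENNReal.sum_le_tsum _)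
    rw [Finset.mem_powerset] at hY
    by_cases hcomp : ∀ y ∈ Y, ∀ y' ∈ Y, y ≠ y' → ¬R y y'
    · rw [if_pos hcomp, htb]
      simp only
      rw [if_pos ⟨fun y hy => hFQ y (hY hy), hcomp⟩]
      refine mul_le_mul_right (eexp_mono (sum_le_tsum_set f ?_)) _
      intro x hx
      rw [Finset.mem_filter] at hx
      exact ⟨hFQ x hx.1, hx.2⟩
    · rw [if_neg hcomp]
      exact zero_le
  by_cases htop : (∑' w : Q, f w) = ⊤
  · rw [htop, eexp_top]
    calc (⊤ : ℝ≥0∞) = ∑' w : Q, f w := htop.symm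
      _ ≤ ∑' w : Q, tb {w.1} := by
          refine ENNReal.tsum_le_tsum fun y => ?_
          rw [htb]
          simp only
          rw [if_pos ⟨fun z hz => by rw [Finset.mem_singleton.mp hz]; exact y.2,
            fun z hz z' hz' hne => absurd
              ((Finset.mem_singleton.mp hz).trans (Finset.mem_singleton.mp hz').symm) hne⟩]
          rw [Finset.prod_singleton]
          calc f y.1 = f y.1 * 1 := (mul_one _).symm
            _ ≤ _ := mul_le_mul_right (one_le_eexp _) _
      _ ≤ B := by
          refine tsum_comp_le_tsum_of_injective (f := fun w : Q => ({w.1} : Finset P))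
            (fun a b hab => ?_) tb
          apply Subtype.ext
          exact Finset.singleton_injective (by exact hab)
  · have main : ∀ δ : ℝ, 0 < δ → eexp (∑' w : Q, f w) ≤ B * ENNReal.ofReal (Real.exp δ) := by
      intro δ hδ
      obtain ⟨F, hFQ, hcF⟩ : ∃ F : Finset P, (∀ x ∈ F, x ∈ Q) ∧
          (∑' w : Q, f w) ≤ ∑ w ∈ F, f w + ENNReal.ofReal δ := by
        rcases eq_or_ne (∑' w : Q, f w) 0 with hc0 | hc0
        · exact ⟨∅, by simp, by rw [hc0]; exact zero_le⟩
        · have h1 : (∑' w : Q, f w) - ENNReal.ofReal δ < ∑' w : Q, f w :=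
            ENNReal.sub_lt_self htop hc0 (by simp [hδ])
          have h2 : (∑' w : Q, f w) - ENNReal.ofReal δ <
              ⨆ s : Finset Q, ∑ x ∈ s, f x.1 := by
            rw [← ENNReal.tsum_eq_iSup_sum]; exact h1
          obtain ⟨G, hG⟩ := lt_iSup_iff.mp h2
          refine ⟨G.image Subtype.val, ?_, ?_⟩
          · intro x hx
            obtain ⟨y, hy, rfl⟩ := Finset.mem_image.mp hx
            exact y.2
          · have hsum : ∑ w ∈ G.image Subtype.val, f w = ∑ x ∈ G, f x.1 :=
              Finset.sum_image (fun a _ b _ h => Subtype.ext h)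
            rw [hsum]
            calc (∑' w : Q, f w) ≤ ((∑' w : Q, f w) - ENNReal.ofReal δ) + ENNReal.ofReal δ :=
                le_tsub_add
              _ ≤ ∑ x ∈ G, f x.1 + ENNReal.ofReal δ := add_le_add_left hG.le _
      calc eexp (∑' w : Q, f w) ≤ eexp (∑ w ∈ F, f w + ENNReal.ofReal δ) := eexp_mono hcF
        _ = eexp (∑ w ∈ F, f w) * eexp (ENNReal.ofReal δ) := eexp_add _ _
        _ ≤ B * eexp (ENNReal.ofReal δ) := mul_le_mul_left (hfin F hFQ) _
        _ = B * ENNReal.ofReal (Real.exp δ) := by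
            rw [eexp_of_ne_top ENNReal.ofReal_ne_top, ENNReal.toReal_ofReal hδ.le]
    have ht : Tendsto (fun n : ℕ => B * ENNReal.ofReal (Real.exp (1 / (n + 1)))) atTop
        (nhds B) := by
      have h0 : Tendsto (fun n : ℕ => 1 / ((n : ℝ) + 1)) atTop (nhds 0) :=
        tendsto_one_div_add_atTop_nhds_zero_nat
      have h1 : Tendsto (fun n : ℕ => ENNReal.ofReal (Real.exp (1 / ((n : ℝ) + 1)))) atTop
          (nhds (ENNReal.ofReal (Real.exp 0))) :=
        (ENNReal.continuous_ofReal.tendsto _).comp ((Real.continuous_exp.tendsto _).comp h0)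
      rw [Real.exp_zero, ENNReal.ofReal_one] at h1
      have := ENNReal.Tendsto.const_mul h1 (Or.inl one_ne_zero) (a := B)
      rwa [mul_one] at this
    exact ge_of_tendsto' ht (fun n => main _ (by positivity))


lemma tsum_set_union_disj (f : P → ℝ≥0∞) {s t : Set P} (h : Disjoint s t) :
    (∑' w : ↑(s ∪ t), f w) = (∑' w : s, f w) + ∑' w : t, f w :=
  ENNReal.summable.tsum_union_disjoint h ENNReal.summable

lemma eexp_tsum_union (f : P → ℝ≥0∞) {s t : Set P} (h : Disjoint s t) :
    eexp (∑' w : ↑(s ∪ t), f w) = eexp (∑' w : s, f w) * eexp (∑' w : t, f w) := by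
  rw [tsum_set_union_disj f h, eexp_add]

lemma eexp_tsum_mono (f : P → ℝ≥0∞) {s t : Set P} (h : s ⊆ t) :
    eexp (∑' w : s, f w) ≤ eexp (∑' w : t, f w) :=
  eexp_mono (tsum_mono_subtype f h)

/-- the function summed in `1 + Σ` (unprimed, bigger) -/
def gfun (R : P → P → Prop) (f : P → ℝ≥0∞) (x₁ : P) (Y : Finset P) : ℝ≥0∞ :=
  if (∀ y ∈ Y, R y x₁) ∧ (∀ y ∈ Y, ∀ y' ∈ Y, y ≠ y' → ¬R y y') then
    (∏ y ∈ Y, f y) * eexp (∑' w : {w : P // ∃ y ∈ Y, R w y}, f w)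
  else 0

/-- the function summed in `1 + Σ'` (primed, restricted) -/
def g1fun (R : P → P → Prop) (f : P → ℝ≥0∞) (x₁ : P) (Xs : Finset P) (Y : Finset P) : ℝ≥0∞ :=
  if (∀ y ∈ Y, R y x₁) ∧ (∀ y ∈ Y, ∀ y' ∈ Y, y ≠ y' → ¬R y y') ∧
      (∀ y ∈ Y, ∀ v ∈ Xs, ¬R y v) then
    (∏ y ∈ Y, f y) *
      eexp (∑' w : {w : P // (∃ y ∈ Y, R w y) ∧ ¬∃ v ∈ Xs, R w v}, f w)
  else 0

/-- `Q(Y₁) = (Γ(x₁) ∩ Γ(X)) \ Γ(Y₁)` -/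
def Qset (R : P → P → Prop) (x₁ : P) (Xs : Finset P) (Y₁ : Finset P) : Set P :=
  {w | (R w x₁ ∧ ∃ v ∈ Xs, R w v) ∧ ¬∃ y ∈ Y₁, R w y}

lemma keyY1 (R : P → P → Prop) (hsymm : ∀ a b, R a b → R b a) (hrefl : ∀ a, R a a)
    (f : P → ℝ≥0∞) (hf : ∀ w, f w ≠ ⊤) (x₁ : P) (Xs : Finset P) (Y₁ : Finset P)
    (hc1 : ∀ y ∈ Y₁, R y x₁)
    (hc2 : ∀ y ∈ Y₁, ∀ y' ∈ Y₁, y ≠ y' → ¬R y y')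
    (hc3 : ∀ y ∈ Y₁, ∀ v ∈ Xs, ¬R y v) :
    eexp (∑' w : {w : P | R w x₁ ∧ ∃ v ∈ Xs, R w v}, f w) *
      ((∏ y ∈ Y₁, f y) *
        eexp (∑' w : {w : P // (∃ y ∈ Y₁, R w y) ∧ ¬∃ v ∈ Xs, R w v}, f w))
    ≤ ∑' Y₂ : Finset P,
        if (∀ y ∈ Y₂, y ∈ Qset R x₁ Xs Y₁) ∧ (∀ y ∈ Y₂, ∀ y' ∈ Y₂, y ≠ y' → ¬R y y') then
          gfun R f x₁ (Y₁ ∪ Y₂)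
        else 0 := by
  set S : Set P := {w : P | R w x₁ ∧ ∃ v ∈ Xs, R w v} with hS
  set A : Set P := {w : P | (∃ y ∈ Y₁, R w y) ∧ ¬∃ v ∈ Xs, R w v} with hA
  set T1 : Set P := {w : P | (R w x₁ ∧ ∃ v ∈ Xs, R w v) ∧ ∃ y ∈ Y₁, R w y} with hT1
  set QQ : Set P := Qset R x₁ Xs Y₁ with hQQ
  -- split E_S
  have hSsplit : S = T1 ∪ QQ := by
    ext w
    simp only [hS, hT1, hQQ, Qset, Set.mem_setOf_eq, Set.mem_union]
    constructor
    · intro hw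
      by_cases h : ∃ y ∈ Y₁, R w y
      · exact Or.inl ⟨hw, h⟩
      · exact Or.inr ⟨hw, h⟩
    · rintro (hw | hw) <;> exact hw.1
  have hdisjTQ : Disjoint T1 QQ := by
    rw [Set.disjoint_left]; intro w hw hw'
    exact hw'.2 hw.2
  have hES : eexp (∑' w : S, f w) =
      eexp (∑' w : T1, f w) * eexp (∑' w : QQ, f w) := by
    rw [show (∑' w : S, f w) = ∑' w : ↑(T1 ∪ QQ), f w from tsum_congr_set_coe _ hSsplit]
    exact eexp_tsum_union f hdisjTQ
  -- apply claimB
  have hB := claimB R hsymm hrefl f hf QQ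
  -- termwise bound
  have hterm : ∀ Y₂ : Finset P,
      eexp (∑' w : T1, f w) * ((∏ y ∈ Y₁, f y) *
          eexp (∑' w : {w : P // (∃ y ∈ Y₁, R w y) ∧ ¬∃ v ∈ Xs, R w v}, f w)) *
        (if (∀ y ∈ Y₂, y ∈ QQ) ∧ (∀ y ∈ Y₂, ∀ y' ∈ Y₂, y ≠ y' → ¬R y y') then
          (∏ y ∈ Y₂, f y) * eexp (∑' w : (QQ ∩ {w | ∃ y ∈ Y₂, R w y} : Set P), f w)
        else 0)
      ≤ (if (∀ y ∈ Y₂, y ∈ Qset R x₁ Xs Y₁) ∧ (∀ y ∈ Y₂, ∀ y' ∈ Y₂, y ≠ y' → ¬R y y') then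
          gfun R f x₁ (Y₁ ∪ Y₂)
        else 0) := by
    intro Y₂
    by_cases hcond : (∀ y ∈ Y₂, y ∈ QQ) ∧ (∀ y ∈ Y₂, ∀ y' ∈ Y₂, y ≠ y' → ¬R y y')
    · rw [if_pos hcond, if_pos hcond]
      obtain ⟨hQ2, hcomp2⟩ := hcond
      -- membership facts
      have hY2x : ∀ y ∈ Y₂, R y x₁ := fun y hy => (hQ2 y hy).1.1
      have hY2X : ∀ y ∈ Y₂, ∃ v ∈ Xs, R y v := fun y hy => (hQ2 y hy).1.2
      have hY2Y1 : ∀ y ∈ Y₂, ¬∃ y' ∈ Y₁, R y y' := fun y hy => (hQ2 y hy).2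
      have hdisjY : Disjoint Y₁ Y₂ := by
        rw [Finset.disjoint_left]
        intro y hy1 hy2
        obtain ⟨v, hv, hrv⟩ := hY2X y hy2
        exact hc3 y hy1 v hv hrv
      -- the union satisfies the gfun condition
      have hga : ∀ y ∈ Y₁ ∪ Y₂, R y x₁ := by
        intro y hy
        rcases Finset.mem_union.mp hy with hy | hy
        · exact hc1 y hy
        · exact hY2x y hy
      have hgb : ∀ y ∈ Y₁ ∪ Y₂, ∀ y' ∈ Y₁ ∪ Y₂, y ≠ y' → ¬R y y' := by
        intro y hy y' hy' hne
        rcases Finset.mem_union.mp hy with hy | hy <;>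
          rcases Finset.mem_union.mp hy' with hy' | hy'
        · exact hc2 y hy y' hy' hne
        · intro h
          exact hY2Y1 y' hy' ⟨y, hy, hsymm _ _ h⟩
        · intro h
          exact hY2Y1 y hy ⟨y', hy', h⟩
        · exact hcomp2 y hy y' hy' hne
      rw [gfun, if_pos ⟨hga, hgb⟩, Finset.prod_union hdisjY]
      -- exponent comparison
      set U2 : Set P := QQ ∩ {w | ∃ y ∈ Y₂, R w y} with hU2
      have hdisjAT : Disjoint A T1 := by
        rw [Set.disjoint_left]; intro w hw hw'
        exact hw.2 hw'.1.2
      have hdisjATU : Disjoint (A ∪ T1) U2 := by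
        rw [Set.disjoint_left]; intro w hw hw'
        rcases hw with hw | hw
        · exact hw.2 hw'.1.1.2
        · exact hw'.1.2 hw.2
      have hsub : (A ∪ T1) ∪ U2 ⊆ {w : P | ∃ y ∈ Y₁ ∪ Y₂, R w y} := by
        intro w hw
        rcases hw with (hw | hw) | hw
        · obtain ⟨y, hy, hr⟩ := hw.1
          exact ⟨y, Finset.mem_union_left _ hy, hr⟩
        · obtain ⟨y, hy, hr⟩ := hw.2
          exact ⟨y, Finset.mem_union_left _ hy, hr⟩
        · obtain ⟨y, hy, hr⟩ := hw.2
          exact ⟨y, Finset.mem_union_right _ hy, hr⟩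
      have hexp : eexp (∑' w : A, f w) * eexp (∑' w : T1, f w) * eexp (∑' w : U2, f w)
          ≤ eexp (∑' w : {w : P // ∃ y ∈ Y₁ ∪ Y₂, R w y}, f w) := by
        rw [← eexp_tsum_union f hdisjAT, ← eexp_tsum_union f hdisjATU]
        exact eexp_tsum_mono f hsub
      calc eexp (∑' w : T1, f w) * ((∏ y ∈ Y₁, f y) * eexp (∑' w : A, f w)) *
            ((∏ y ∈ Y₂, f y) * eexp (∑' w : U2, f w))
          = ((∏ y ∈ Y₁, f y) * ∏ y ∈ Y₂, f y) *
            (eexp (∑' w : A, f w) * eexp (∑' w : T1, f w) * eexp (∑' w : U2, f w)) := by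
            ring
        _ ≤ ((∏ y ∈ Y₁, f y) * ∏ y ∈ Y₂, f y) *
            eexp (∑' w : {w : P // ∃ y ∈ Y₁ ∪ Y₂, R w y}, f w) := mul_le_mul_right hexp _
    · rw [if_neg hcond, if_neg hcond, mul_zero]
  calc eexp (∑' w : S, f w) * ((∏ y ∈ Y₁, f y) *
        eexp (∑' w : {w : P // (∃ y ∈ Y₁, R w y) ∧ ¬∃ v ∈ Xs, R w v}, f w))
      = eexp (∑' w : T1, f w) * ((∏ y ∈ Y₁, f y) *
          eexp (∑' w : {w : P // (∃ y ∈ Y₁, R w y) ∧ ¬∃ v ∈ Xs, R w v}, f w)) *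
        eexp (∑' w : QQ, f w) := by rw [hES]; ring
    _ ≤ eexp (∑' w : T1, f w) * ((∏ y ∈ Y₁, f y) *
          eexp (∑' w : {w : P // (∃ y ∈ Y₁, R w y) ∧ ¬∃ v ∈ Xs, R w v}, f w)) *
        (∑' Y₂ : Finset P,
          if (∀ y ∈ Y₂, y ∈ QQ) ∧ (∀ y ∈ Y₂, ∀ y' ∈ Y₂, y ≠ y' → ¬R y y') then
            (∏ y ∈ Y₂, f y) * eexp (∑' w : (QQ ∩ {w | ∃ y ∈ Y₂, R w y} : Set P), f w)
          else 0) := mul_le_mul_right hB _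
    _ = ∑' Y₂ : Finset P,
          eexp (∑' w : T1, f w) * ((∏ y ∈ Y₁, f y) *
            eexp (∑' w : {w : P // (∃ y ∈ Y₁, R w y) ∧ ¬∃ v ∈ Xs, R w v}, f w)) *
          (if (∀ y ∈ Y₂, y ∈ QQ) ∧ (∀ y ∈ Y₂, ∀ y' ∈ Y₂, y ≠ y' → ¬R y y') then
            (∏ y ∈ Y₂, f y) * eexp (∑' w : (QQ ∩ {w | ∃ y ∈ Y₂, R w y} : Set P), f w)
          else 0) := (ENNReal.tsum_mul_left).symm
    _ ≤ _ := ENNReal.tsum_le_tsum hterm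


lemma mainIneq (R : P → P → Prop) (hsymm : ∀ a b, R a b → R b a) (hrefl : ∀ a, R a a)
    (f : P → ℝ≥0∞) (hf : ∀ w, f w ≠ ⊤) (x₁ : P) (Xs : Finset P) :
    eexp (∑' w : {w : P | R w x₁ ∧ ∃ v ∈ Xs, R w v}, f w) *
      (∑' Y : Finset P, g1fun R f x₁ Xs Y)
    ≤ ∑' Y : Finset P, gfun R f x₁ Y := by
  rw [← ENNReal.tsum_mul_left]
  set G : Finset P → Finset P → ℝ≥0∞ := fun Y₁ Y₂ =>
    if ((∀ y ∈ Y₁, R y x₁) ∧ (∀ y ∈ Y₁, ∀ y' ∈ Y₁, y ≠ y' → ¬R y y') ∧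
        (∀ y ∈ Y₁, ∀ v ∈ Xs, ¬R y v)) ∧
       ((∀ y ∈ Y₂, y ∈ Qset R x₁ Xs Y₁) ∧
        (∀ y ∈ Y₂, ∀ y' ∈ Y₂, y ≠ y' → ¬R y y')) then
      gfun R f x₁ (Y₁ ∪ Y₂)
    else 0 with hG
  have step1 : ∀ Y₁ : Finset P,
      eexp (∑' w : {w : P | R w x₁ ∧ ∃ v ∈ Xs, R w v}, f w) * g1fun R f x₁ Xs Y₁ ≤
        ∑' Y₂ : Finset P, G Y₁ Y₂ := by
    intro Y₁
    simp only [hG]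
    by_cases h1 : (∀ y ∈ Y₁, R y x₁) ∧ (∀ y ∈ Y₁, ∀ y' ∈ Y₁, y ≠ y' → ¬R y y') ∧
        (∀ y ∈ Y₁, ∀ v ∈ Xs, ¬R y v)
    · have hg1 : g1fun R f x₁ Xs Y₁ = (∏ y ∈ Y₁, f y) *
          eexp (∑' w : {w : P // (∃ y ∈ Y₁, R w y) ∧ ¬∃ v ∈ Xs, R w v}, f w) := by
        rw [g1fun, if_pos h1]
      rw [hg1]
      refine le_trans (keyY1 R hsymm hrefl f hf x₁ Xs Y₁ h1.1 h1.2.1 h1.2.2) ?_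
      refine ENNReal.tsum_le_tsum fun Y₂ => ?_
      by_cases h2 : (∀ y ∈ Y₂, y ∈ Qset R x₁ Xs Y₁) ∧
          (∀ y ∈ Y₂, ∀ y' ∈ Y₂, y ≠ y' → ¬R y y')
      · rw [if_pos h2, if_pos ⟨h1, h2⟩]
      · rw [if_neg h2, if_neg (fun h => h2 h.2)]
    · rw [g1fun, if_neg h1, mul_zero]
      exact zero_le
  have hsupp : Function.support (fun p : Finset P × Finset P => G p.1 p.2) ⊆
      {p : Finset P × Finset P |
        ((∀ y ∈ p.1, R y x₁) ∧ (∀ y ∈ p.1, ∀ y' ∈ p.1, y ≠ y' → ¬R y y') ∧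
          (∀ y ∈ p.1, ∀ v ∈ Xs, ¬R y v)) ∧
         ((∀ y ∈ p.2, y ∈ Qset R x₁ Xs p.1) ∧
          (∀ y ∈ p.2, ∀ y' ∈ p.2, y ≠ y' → ¬R y y'))} := by
    intro p hp
    by_contra h
    apply hp
    simp only [hG]
    exact if_neg h
  have hinj : Function.Injective (fun q : {p : Finset P × Finset P //
      ((∀ y ∈ p.1, R y x₁) ∧ (∀ y ∈ p.1, ∀ y' ∈ p.1, y ≠ y' → ¬R y y') ∧
          (∀ y ∈ p.1, ∀ v ∈ Xs, ¬R y v)) ∧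
         ((∀ y ∈ p.2, y ∈ Qset R x₁ Xs p.1) ∧
          (∀ y ∈ p.2, ∀ y' ∈ p.2, y ≠ y' → ¬R y y'))} => q.1.1 ∪ q.1.2) := by
    have key : ∀ (Y₁ Y₂ : Finset P), (∀ y ∈ Y₁, ∀ v ∈ Xs, ¬R y v) →
        (∀ y ∈ Y₂, y ∈ Qset R x₁ Xs Y₁) →
        Y₁ = (Y₁ ∪ Y₂).filter (fun y => ¬∃ v ∈ Xs, R y v) ∧
        Y₂ = (Y₁ ∪ Y₂).filter (fun y => ∃ v ∈ Xs, R y v) := by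
      intro Y₁ Y₂ hcc hdd
      constructor <;> ext y <;> simp only [Finset.mem_filter, Finset.mem_union]
      · constructor
        · intro hy
          refine ⟨Or.inl hy, ?_⟩
          rintro ⟨v, hv, hr⟩
          exact hcc y hy v hv hr
        · rintro ⟨hy | hy, hnex⟩
          · exact hy
          · exact absurd (hdd y hy).1.2 hnex
      · constructor
        · intro hy
          exact ⟨Or.inr hy, (hdd y hy).1.2⟩
        · rintro ⟨hy | hy, hex⟩
          · obtain ⟨v, hv, hr⟩ := hex
            exact absurd hr (hcc y hy v hv)
          · exact hy
    rintro ⟨⟨a1, a2⟩, ha⟩ ⟨⟨b1, b2⟩, hb⟩ h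
    simp only at h
    obtain ⟨ha1, ha2⟩ := key a1 a2 ha.1.2.2 ha.2.1
    obtain ⟨hb1, hb2⟩ := key b1 b2 hb.1.2.2 hb.2.1
    apply Subtype.ext
    simp only [Prod.mk.injEq]
    exact ⟨by rw [ha1, hb1, h], by rw [ha2, hb2, h]⟩
  calc ∑' Y₁ : Finset P,
        eexp (∑' w : {w : P | R w x₁ ∧ ∃ v ∈ Xs, R w v}, f w) * g1fun R f x₁ Xs Y₁
      ≤ ∑' Y₁ : Finset P, ∑' Y₂ : Finset P, G Y₁ Y₂ := ENNReal.tsum_le_tsum step1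
    _ = ∑' p : Finset P × Finset P, G p.1 p.2 := ENNReal.tsum_prod.symm
    _ = ∑' q : {p : Finset P × Finset P //
          ((∀ y ∈ p.1, R y x₁) ∧ (∀ y ∈ p.1, ∀ y' ∈ p.1, y ≠ y' → ¬R y y') ∧
            (∀ y ∈ p.1, ∀ v ∈ Xs, ¬R y v)) ∧
          ((∀ y ∈ p.2, y ∈ Qset R x₁ Xs p.1) ∧
            (∀ y ∈ p.2, ∀ y' ∈ p.2, y ≠ y' → ¬R y y'))}, G q.1.1 q.1.2 :=
        (tsum_subtype_eq_of_support_subset hsupp).symm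
    _ = ∑' q : {p : Finset P × Finset P //
          ((∀ y ∈ p.1, R y x₁) ∧ (∀ y ∈ p.1, ∀ y' ∈ p.1, y ≠ y' → ¬R y y') ∧
            (∀ y ∈ p.1, ∀ v ∈ Xs, ¬R y v)) ∧
          ((∀ y ∈ p.2, y ∈ Qset R x₁ Xs p.1) ∧
            (∀ y ∈ p.2, ∀ y' ∈ p.2, y ≠ y' → ¬R y y'))},
          gfun R f x₁ (q.1.1 ∪ q.1.2) := by
        refine tsum_congr fun q => ?_
        simp only [hG]
        exact if_pos q.2
    _ ≤ ∑' Y : Finset P, gfun R f x₁ Y := tsum_comp_le_tsum_of_injective hinj _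


/-- **Lemma 2.8 (key auxiliary inequality, cross-multiplied form).**
`R` is the incompatibility relation (`R a b` ↔ `a ≁ b`); `Γ(x) = {y | R y x}`,
`Γ(W) = ⋃_{w ∈ W} Γ(w)`. The sums over `Y` run over finite nonempty compatible
subsets of `Γ(x₁)`; all sums and products are evaluated in `[0,∞]`, products of
exponentials `∏_{w ∈ S} e^{μ(w)}` being encoded as `eexp (∑_{w ∈ S} μ(w))`. -/
theorem statement5 {P : Type} [Countable P] (R : P → P → Prop)
    (hsymm : ∀ a b, R a b → R b a) (hrefl : ∀ a, R a a)
    (μ : P → ℝ) (hμ : ∀ a, 0 ≤ μ a)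
    (x₁ : P) (Xs : Finset P) (hXcomp : ∀ y ∈ Xs, ¬R x₁ y) :
    ENNReal.ofReal (μ x₁) *
        eexp (∑' w : {w : P // R w x₁}, ENNReal.ofReal (μ w)) *
        (1 + ∑' Y : Finset P,
          if Y.Nonempty ∧ (∀ y ∈ Y, R y x₁) ∧
              (∀ y ∈ Y, ∀ y' ∈ Y, y ≠ y' → ¬R y y') ∧
              (∀ y ∈ Y, ∀ v ∈ Xs, ¬R y v) then
            (∏ y ∈ Y, ENNReal.ofReal (μ y)) *
              eexp (∑' w : {w : P // (∃ y ∈ Y, R w y) ∧ ¬∃ v ∈ Xs, R w v},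
                ENNReal.ofReal (μ w))
          else 0)
      ≤ ENNReal.ofReal (μ x₁) *
          eexp (∑' w : {w : P // R w x₁ ∧ ¬∃ v ∈ Xs, R w v}, ENNReal.ofReal (μ w)) *
          (1 + ∑' Y : Finset P,
            if Y.Nonempty ∧ (∀ y ∈ Y, R y x₁) ∧
                (∀ y ∈ Y, ∀ y' ∈ Y, y ≠ y' → ¬R y y') then
              (∏ y ∈ Y, ENNReal.ofReal (μ y)) *
                eexp (∑' w : {w : P // ∃ y ∈ Y, R w y}, ENNReal.ofReal (μ w))
            else 0) := by
  classical
  have hf : ∀ w : P, ENNReal.ofReal (μ w) ≠ ⊤ := fun w => ENNReal.ofReal_ne_top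
  -- convert `1 + Σ'` to a clean tsum
  have h1 : (1 : ℝ≥0∞) + (∑' Y : Finset P,
      if Y.Nonempty ∧ (∀ y ∈ Y, R y x₁) ∧
          (∀ y ∈ Y, ∀ y' ∈ Y, y ≠ y' → ¬R y y') ∧
          (∀ y ∈ Y, ∀ v ∈ Xs, ¬R y v) then
        (∏ y ∈ Y, ENNReal.ofReal (μ y)) *
          eexp (∑' w : {w : P // (∃ y ∈ Y, R w y) ∧ ¬∃ v ∈ Xs, R w v},
            ENNReal.ofReal (μ w))
      else 0)
      = ∑' Y : Finset P, g1fun R (fun w => ENNReal.ofReal (μ w)) x₁ Xs Y := by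
    conv_rhs => rw [ENNReal.tsum_eq_add_tsum_ite (∅ : Finset P)]
    have hempty : g1fun R (fun w => ENNReal.ofReal (μ w)) x₁ Xs ∅ = 1 := by
      rw [g1fun, if_pos ⟨by simp, by simp, by simp⟩]
      have hie : IsEmpty {w : P // (∃ y ∈ (∅ : Finset P), R w y) ∧ ¬∃ v ∈ Xs, R w v} :=
        ⟨fun w => by simpa using w.2.1⟩
      haveI := hie
      rw [Finset.prod_empty, tsum_empty, eexp_zero, one_mul]
    rw [hempty]
    congr 1
    refine tsum_congr fun Y => ?_
    rcases eq_or_ne Y ∅ with rfl | hne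
    · simp
    · rw [if_neg hne, g1fun]
      have hNE : Y.Nonempty := Finset.nonempty_iff_ne_empty.mpr hne
      by_cases hc : (∀ y ∈ Y, R y x₁) ∧ (∀ y ∈ Y, ∀ y' ∈ Y, y ≠ y' → ¬R y y') ∧
          (∀ y ∈ Y, ∀ v ∈ Xs, ¬R y v)
      · rw [if_pos ⟨hNE, hc⟩, if_pos hc]
      · rw [if_neg (fun h => hc h.2), if_neg hc]
  have h2 : (1 : ℝ≥0∞) + (∑' Y : Finset P,
      if Y.Nonempty ∧ (∀ y ∈ Y, R y x₁) ∧
          (∀ y ∈ Y, ∀ y' ∈ Y, y ≠ y' → ¬R y y') then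
        (∏ y ∈ Y, ENNReal.ofReal (μ y)) *
          eexp (∑' w : {w : P // ∃ y ∈ Y, R w y}, ENNReal.ofReal (μ w))
      else 0)
      = ∑' Y : Finset P, gfun R (fun w => ENNReal.ofReal (μ w)) x₁ Y := by
    conv_rhs => rw [ENNReal.tsum_eq_add_tsum_ite (∅ : Finset P)]
    have hempty : gfun R (fun w => ENNReal.ofReal (μ w)) x₁ ∅ = 1 := by
      rw [gfun, if_pos ⟨by simp, by simp⟩]
      have hie : IsEmpty {w : P // ∃ y ∈ (∅ : Finset P), R w y} :=
        ⟨fun w => by simpa using w.2⟩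
      haveI := hie
      rw [Finset.prod_empty, tsum_empty, eexp_zero, one_mul]
    rw [hempty]
    congr 1
    refine tsum_congr fun Y => ?_
    rcases eq_or_ne Y ∅ with rfl | hne
    · simp
    · rw [if_neg hne, gfun]
      have hNE : Y.Nonempty := Finset.nonempty_iff_ne_empty.mpr hne
      by_cases hc : (∀ y ∈ Y, R y x₁) ∧ (∀ y ∈ Y, ∀ y' ∈ Y, y ≠ y' → ¬R y y')
      · rw [if_pos ⟨hNE, hc⟩, if_pos hc]
      · rw [if_neg (fun h => hc h.2), if_neg hc]
  -- split the big exponential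
  have h3 : eexp (∑' w : {w : P // R w x₁}, ENNReal.ofReal (μ w)) =
      eexp (∑' w : {w : P // R w x₁ ∧ ¬∃ v ∈ Xs, R w v}, ENNReal.ofReal (μ w)) *
      eexp (∑' w : {w : P | R w x₁ ∧ ∃ v ∈ Xs, R w v}, ENNReal.ofReal (μ w)) := by
    have hset : {w : P | R w x₁} =
        ({w : P | R w x₁ ∧ ¬∃ v ∈ Xs, R w v} ∪ {w : P | R w x₁ ∧ ∃ v ∈ Xs, R w v}) := by
      ext w
      simp only [Set.mem_setOf_eq, Set.mem_union]
      constructor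
      · intro hw
        by_cases h : ∃ v ∈ Xs, R w v
        · exact Or.inr ⟨hw, h⟩
        · exact Or.inl ⟨hw, h⟩
      · rintro (hw | hw) <;> exact hw.1
    have hdisj : Disjoint {w : P | R w x₁ ∧ ¬∃ v ∈ Xs, R w v}
        {w : P | R w x₁ ∧ ∃ v ∈ Xs, R w v} := by
      rw [Set.disjoint_left]
      intro w hw hw'
      exact hw.2 hw'.2
    calc eexp (∑' w : {w : P // R w x₁}, ENNReal.ofReal (μ w))
        = eexp (∑' w : ↥{w : P | R w x₁}, ENNReal.ofReal (μ w)) := rfl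
      _ = eexp (∑' w : ↑({w : P | R w x₁ ∧ ¬∃ v ∈ Xs, R w v} ∪
            {w : P | R w x₁ ∧ ∃ v ∈ Xs, R w v}), ENNReal.ofReal (μ w)) :=
          congrArg eexp
            (tsum_congr_set_coe (fun w => ENNReal.ofReal (μ w)) hset)
      _ = eexp (∑' w : ↥{w : P | R w x₁ ∧ ¬∃ v ∈ Xs, R w v}, ENNReal.ofReal (μ w)) *
          eexp (∑' w : {w : P | R w x₁ ∧ ∃ v ∈ Xs, R w v}, ENNReal.ofReal (μ w)) :=
          eexp_tsum_union (fun w => ENNReal.ofReal (μ w)) hdisj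
      _ = _ := rfl
  rw [h1, h2, h3]
  have main := mainIneq R hsymm hrefl (fun w => ENNReal.ofReal (μ w)) hf x₁ Xs
  calc ENNReal.ofReal (μ x₁) *
        (eexp (∑' w : {w : P // R w x₁ ∧ ¬∃ v ∈ Xs, R w v}, ENNReal.ofReal (μ w)) *
          eexp (∑' w : {w : P | R w x₁ ∧ ∃ v ∈ Xs, R w v}, ENNReal.ofReal (μ w))) *
        (∑' Y : Finset P, g1fun R (fun w => ENNReal.ofReal (μ w)) x₁ Xs Y)
      = ENNReal.ofReal (μ x₁) *
        eexp (∑' w : {w : P // R w x₁ ∧ ¬∃ v ∈ Xs, R w v}, ENNReal.ofReal (μ w)) *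
        (eexp (∑' w : {w : P | R w x₁ ∧ ∃ v ∈ Xs, R w v}, ENNReal.ofReal (μ w)) *
          ∑' Y : Finset P, g1fun R (fun w => ENNReal.ofReal (μ w)) x₁ Xs Y) := by ring
    _ ≤ ENNReal.ofReal (μ x₁) *
        eexp (∑' w : {w : P // R w x₁ ∧ ¬∃ v ∈ Xs, R w v}, ENNReal.ofReal (μ w)) *
        (∑' Y : Finset P, gfun R (fun w => ENNReal.ofReal (μ w)) x₁ Y) :=
      mul_le_mul_right main _

end
end

section
/- (Alternating sign property.) Suppose f satisfies -1 ≤ f(x,y) ≤ 0 for all x, y ∈ X (non-negative pair potential). Then for all n ≥ 1, all k ≥ 0 and all (x_1,…,x_{n+k}) ∈ X^{n+k}, ψ_{n,n+k}(x_1,…,x_{n+k}) = (-1)^k |ψ_{n,n+k}(x_1,…,x_{n+k})|, i.e. (-1)^k ψ_{n,n+k}(x_1,…,x_{n+k}) ≥ 0. -/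
open scoped Classical

noncomputable section

/-- Weight of a graph `G` on `{0,…,m-1}` with respect to the Mayer function `f`
and the colouring `x`. -/
def graphWeight {X : Type} (f : X → X → ℝ) {m : ℕ} (G : SimpleGraph (Fin m))
    (x : Fin m → X) : ℝ :=
  ∏ p ∈ Finset.univ.filter (fun p : Fin m × Fin m => p.1 < p.2 ∧ G.Adj p.1 p.2),
    f (x p.1) (x p.2)

/-- A graph on `Fin m` is root-connected with roots `{0,…,n-1}` if every non-root
vertex is adjacent to at least one root vertex. -/
def rootConnected (n : ℕ) {m : ℕ} (G : SimpleGraph (Fin m)) : Prop :=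
  ∀ j : Fin m, n ≤ (j : ℕ) → ∃ i : Fin m, (i : ℕ) < n ∧ G.Adj i j

/-- `ψ_{n,n+k}`: sum of graph weights over all root-connected graphs. -/
def psi {X : Type} (f : X → X → ℝ) (n k : ℕ) (x : Fin (n + k) → X) : ℝ :=
  ∑ G ∈ Finset.univ.filter (fun G : SimpleGraph (Fin (n + k)) => rootConnected n G),
    graphWeight f G x

/-!
Encode a graph by its set of edges `(i, j)`, `i < j`. Edges not joining a root to a non-root are
unconstrained, while every non-root `j` needs a nonempty set of edges to the roots, so the sum over
root-connected graphs factorizes: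
`ψ = ∏_{unconstrained (i, j)} (1 + f(x_i, x_j)) * ∏_{j non-root} (∏_{i root} (1 + f(x_i, x_j)) - 1)`.
For `-1 ≤ f ≤ 0` the first factor is nonnegative and each of the `k` others is nonpositive.
-/

namespace Finset

variable {α ι R M : Type*} [DecidableEq α] [CommRing R] [AddCommMonoid M]

theorem union_inter_of_subset_of_disjoint {a b A B : Finset α} (ha : a ⊆ A) (hb : b ⊆ B)
    (h : Disjoint A B) : (a ∪ b) ∩ A = a ∧ (a ∪ b) ∩ B = b := by
  constructor <;> ext x <;> simp only [mem_inter, mem_union] <;>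
    grind [disjoint_left]

theorem sum_powerset_union_of_disjoint {A B : Finset α} (h : Disjoint A B)
    (F : Finset α → M) :
    ∑ s ∈ (A ∪ B).powerset, F s = ∑ a ∈ A.powerset, ∑ b ∈ B.powerset, F (a ∪ b) := by
  have hrecombine : ∀ s ∈ (A ∪ B).powerset, s ∩ A ∪ s ∩ B = s := fun s hs => by
    rw [← inter_union_distrib_left, inter_eq_left.2 (mem_powerset.1 hs)]
  rw [← sum_product']
  refine sum_nbij' (fun s => (s ∩ A, s ∩ B)) (fun ab => ab.1 ∪ ab.2) ?_ ?_ hrecombine ?_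
    fun s hs => by rw [hrecombine s hs]
  · intro s _
    simp only [mem_product, mem_powerset]
    exact ⟨inter_subset_right, inter_subset_right⟩
  · intro ab hab
    simp only [mem_product, mem_powerset] at hab ⊢
    exact union_subset_union hab.1 hab.2
  · intro ab hab
    simp only [mem_product, mem_powerset] at hab
    simp [union_inter_of_subset_of_disjoint hab.1 hab.2 h]

theorem sum_powerset_union_filter_prod {A B : Finset α} (h : Disjoint A B)
    (p q : Finset α → Prop) [DecidablePred p] [DecidablePred q] (w : α → R) :
    ∑ s ∈ (A ∪ B).powerset with p (s ∩ A) ∧ q (s ∩ B), ∏ x ∈ s, w x =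
      (∑ a ∈ A.powerset with p a, ∏ x ∈ a, w x) * ∑ b ∈ B.powerset with q b, ∏ x ∈ b, w x := by
  rw [sum_filter, sum_powerset_union_of_disjoint h, sum_filter, sum_filter, sum_mul_sum]
  refine sum_congr rfl fun a ha => sum_congr rfl fun b hb => ?_
  rw [mem_powerset] at ha hb
  obtain ⟨hA, hB⟩ := union_inter_of_subset_of_disjoint ha hb h
  rw [hA, hB, prod_union (h.mono ha hb), ite_and]
  split_ifs <;> simp

theorem sum_powerset_nonempty_prod (s : Finset α) (w : α → R) :
    ∑ t ∈ s.powerset with t.Nonempty, ∏ p ∈ t, w p = ∏ p ∈ s, (1 + w p) - 1 := by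
  simp_rw [nonempty_iff_ne_empty, filter_ne', prod_one_add]
  rw [sum_erase_eq_sub (empty_mem_powerset s), prod_empty]

theorem sum_powerset_forall_inter_nonempty {A : Finset α} {B : ι → Finset α} (J : Finset ι)
    (hA : ∀ j ∈ J, Disjoint A (B j)) (hB : (J : Set ι).PairwiseDisjoint B) (w : α → R) :
    ∑ s ∈ (A ∪ J.biUnion B).powerset with ∀ j ∈ J, (s ∩ B j).Nonempty, ∏ p ∈ s, w p =
      (∏ p ∈ A, (1 + w p)) * ∏ j ∈ J, (∏ p ∈ B j, (1 + w p) - 1) := by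
  induction J using Finset.induction_on with
  | empty => simp [prod_one_add]
  | @insert j J hj ih =>
    set C := A ∪ J.biUnion B
    have hjC : Disjoint (B j) C := by
      refine disjoint_union_right.2 ⟨(hA j (mem_insert_self j J)).symm, ?_⟩
      refine disjoint_biUnion_right _ _ _ |>.2 fun i hi => hB ?_ ?_ ?_
      · exact mem_insert_self j J
      · exact mem_insert_of_mem hi
      · rintro rfl; exact hj hi
    have hBC : ∀ i ∈ J, B i ⊆ C := fun i hi =>
      subset_union_right.trans' (subset_biUnion_of_mem B hi)
    have hunion : A ∪ (insert j J).biUnion B = B j ∪ C := by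
      rw [biUnion_insert, union_left_comm]
    have hfilter : ∀ s ∈ (B j ∪ C).powerset, (∀ i ∈ insert j J, (s ∩ B i).Nonempty) ↔
        (s ∩ B j).Nonempty ∧ ∀ i ∈ J, (s ∩ C ∩ B i).Nonempty := by
      intro s _
      rw [forall_mem_insert]
      refine and_congr_right' (forall₂_congr fun i hi => ?_)
      rw [inter_assoc, inter_eq_right.2 (hBC i hi)]
    have hsplit := sum_powerset_union_filter_prod hjC (fun t => t.Nonempty)
      (fun t => ∀ i ∈ J, (t ∩ B i).Nonempty) w
    beta_reduce at hsplit
    rw [hunion, filter_congr hfilter, hsplit, sum_powerset_nonempty_prod,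
      ih (fun i hi => hA i (mem_insert_of_mem hi)) (hB.subset (by simp)), prod_insert hj]
    ring

end Finset

section Graphs

open Finset

variable {m : ℕ}

def ascPairs (m : ℕ) : Finset (Fin m × Fin m) :=
  Finset.univ.filter (fun p : Fin m × Fin m => p.1 < p.2)

/-- An edge `{i, j}` of `G` with `i < j` is recorded as `(i, j)`, as in `graphWeight`. -/
def ascEdges (G : SimpleGraph (Fin m)) : Finset (Fin m × Fin m) :=
  Finset.univ.filter (fun p : Fin m × Fin m => p.1 < p.2 ∧ G.Adj p.1 p.2)

theorem graphWeight_eq_prod_ascEdges {X : Type} (f : X → X → ℝ) (G : SimpleGraph (Fin m))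
    (x : Fin m → X) : graphWeight f G x = ∏ p ∈ ascEdges G, f (x p.1) (x p.2) := rfl

theorem ascEdges_subset_ascPairs (G : SimpleGraph (Fin m)) : ascEdges G ⊆ ascPairs m :=
  fun _ hp => by
    simp only [ascEdges, ascPairs, mem_filter, mem_univ, true_and] at hp ⊢
    exact hp.1

theorem fromRel_ascEdges (G : SimpleGraph (Fin m)) :
    SimpleGraph.fromRel (fun a b => (a, b) ∈ ascEdges G) = G := by
  ext a b
  simp only [ascEdges, SimpleGraph.fromRel_adj, mem_filter, mem_univ, true_and]
  constructor
  · rintro ⟨-, ⟨-, h⟩ | ⟨-, h⟩⟩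
    exacts [h, h.symm]
  · intro h
    refine ⟨G.ne_of_adj h, ?_⟩
    rcases (G.ne_of_adj h).lt_or_gt with hlt | hlt
    exacts [Or.inl ⟨hlt, h⟩, Or.inr ⟨hlt, h.symm⟩]

theorem ascEdges_fromRel {s : Finset (Fin m × Fin m)} (hs : s ⊆ ascPairs m) :
    ascEdges (SimpleGraph.fromRel fun a b => (a, b) ∈ s) = s := by
  have hlt : ∀ {a b}, (a, b) ∈ s → a < b := fun h => by simpa [ascPairs] using hs h
  ext ⟨a, b⟩
  simp only [ascEdges, SimpleGraph.fromRel_adj, mem_filter, mem_univ, true_and]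
  constructor
  · rintro ⟨hab, -, h | h⟩
    exacts [h, absurd hab (hlt h).not_gt]
  · exact fun h => ⟨hlt h, (hlt h).ne, Or.inl h⟩

theorem sum_simpleGraph_eq_sum_powerset_ascPairs {M : Type*} [AddCommMonoid M]
    (F : Finset (Fin m × Fin m) → M) :
    ∑ G : SimpleGraph (Fin m), F (ascEdges G) = ∑ s ∈ (ascPairs m).powerset, F s :=
  sum_nbij' ascEdges (fun s => SimpleGraph.fromRel fun a b => (a, b) ∈ s)
    (fun G _ => mem_powerset.2 (ascEdges_subset_ascPairs G)) (fun _ _ => mem_univ _)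
    (fun G _ => fromRel_ascEdges G) (fun _ hs => ascEdges_fromRel (mem_powerset.1 hs))
    (fun _ _ => rfl)

end Graphs

section Roots

open Finset

variable {m : ℕ}

def nonRoots (n m : ℕ) : Finset (Fin m) :=
  Finset.univ.filter (fun j : Fin m => n ≤ (j : ℕ))

def rootEdges (n : ℕ) (j : Fin m) : Finset (Fin m × Fin m) :=
  Finset.univ.filter (fun p : Fin m × Fin m => (p.1 : ℕ) < n ∧ p.2 = j)

theorem card_nonRoots (n k : ℕ) : #(nonRoots n (n + k)) = k := by
  have h := card_filter_add_card_filter_not (s := univ) fun j : Fin (n + k) => (j : ℕ) < n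
  simp only [not_lt, Fin.card_filter_val_lt, card_univ, Fintype.card_fin] at h
  rw [nonRoots]
  omega

theorem rootEdges_subset_ascPairs {n : ℕ} {j : Fin m} (hj : j ∈ nonRoots n m) :
    rootEdges n j ⊆ ascPairs m := by
  intro p hp
  simp only [nonRoots, rootEdges, ascPairs, mem_filter, mem_univ, true_and] at hj hp ⊢
  rw [Fin.lt_def, hp.2]
  omega

theorem pairwiseDisjoint_rootEdges (n : ℕ) (S : Set (Fin m)) :
    S.PairwiseDisjoint (rootEdges n) := by
  intro i _ j _ hij
  refine disjoint_left.2 fun p hi hj => hij ?_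
  simp only [rootEdges, mem_filter, mem_univ, true_and] at hi hj
  rw [← hi.2, hj.2]

theorem rootConnected_iff (n : ℕ) (G : SimpleGraph (Fin m)) :
    rootConnected n G ↔ ∀ j ∈ nonRoots n m, (ascEdges G ∩ rootEdges n j).Nonempty := by
  simp only [rootConnected, nonRoots, mem_filter, mem_univ, true_and]
  refine forall₂_congr fun j hj => ⟨fun ⟨i, hi, hij⟩ => ⟨(i, j), ?_⟩, fun ⟨p, hp⟩ => ?_⟩
  · simp only [ascEdges, rootEdges, mem_inter, mem_filter, mem_univ, true_and]
    exact ⟨⟨Fin.lt_def.2 (by omega), hij⟩, hi, trivial⟩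
  · simp only [ascEdges, rootEdges, mem_inter, mem_filter, mem_univ, true_and] at hp
    obtain ⟨⟨-, hadj⟩, hi, rfl⟩ := hp
    exact ⟨p.1, hi, hadj⟩

theorem psi_eq_sum_powerset {X : Type} (f : X → X → ℝ) (n k : ℕ) (x : Fin (n + k) → X) :
    psi f n k x = ∑ s ∈ (ascPairs (n + k)).powerset with
      ∀ j ∈ nonRoots n (n + k), (s ∩ rootEdges n j).Nonempty, ∏ p ∈ s, f (x p.1) (x p.2) := by
  simp only [psi, sum_filter, graphWeight_eq_prod_ascEdges, rootConnected_iff]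
  exact sum_simpleGraph_eq_sum_powerset_ascPairs
    fun s => if ∀ j ∈ nonRoots n (n + k), (s ∩ rootEdges n j).Nonempty then
      ∏ p ∈ s, f (x p.1) (x p.2) else 0

theorem psi_eq_mul_prod {X : Type} (f : X → X → ℝ) (n k : ℕ) (x : Fin (n + k) → X) :
    psi f n k x =
      (∏ p ∈ ascPairs (n + k) \ (nonRoots n (n + k)).biUnion (rootEdges n),
        (1 + f (x p.1) (x p.2))) *
      ∏ j ∈ nonRoots n (n + k), (∏ p ∈ rootEdges n j, (1 + f (x p.1) (x p.2)) - 1) := by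
  have hunion := sdiff_union_of_subset
    (biUnion_subset.2 fun j hj => rootEdges_subset_ascPairs (n := n) (m := n + k) hj)
  conv_lhs => rw [psi_eq_sum_powerset, ← hunion]
  -- `convert` only reconciles the decidability instances of the filter predicate
  convert sum_powerset_forall_inter_nonempty _
    (fun j hj => sdiff_disjoint.mono_right (subset_biUnion_of_mem _ hj))
    (pairwiseDisjoint_rootEdges n _) fun p => f (x p.1) (x p.2) using 3

end Roots

theorem eq_neg_one_pow_mul_abs_of_nonneg {R : Type*} [Ring R] [LinearOrder R] [IsOrderedRing R]
    {a : R} {k : ℕ} (h : 0 ≤ (-1) ^ k * a) :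
    a = (-1) ^ k * |a| := by
  rcases neg_one_pow_eq_or R k with hk | hk <;> rw [hk] at h ⊢
  · simp_all [abs_of_nonneg]
  · simp_all [abs_of_nonpos]

theorem statement11_general {X : Type} (f : X → X → ℝ)
    (hfge : ∀ a b, (-1 : ℝ) ≤ f a b) (hfle : ∀ a b, f a b ≤ 0)
    (n k : ℕ) (x : Fin (n + k) → X) :
    psi f n k x = (-1 : ℝ) ^ k * |psi f n k x| := by
  have hnonneg : ∀ a b, 0 ≤ 1 + f a b := fun a b => by linarith [hfge a b]
  have hle_one : ∀ a b, 1 + f a b ≤ 1 := fun a b => by linarith [hfle a b]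
  refine eq_neg_one_pow_mul_abs_of_nonneg ?_
  rw [psi_eq_mul_prod, mul_left_comm, show (-1 : ℝ) ^ k = (-1) ^ (nonRoots n (n + k)).card by
    rw [card_nonRoots], ← Finset.prod_neg]
  refine mul_nonneg (Finset.prod_nonneg fun p _ => hnonneg _ _) (Finset.prod_nonneg fun j _ => ?_)
  have := Finset.prod_le_one (s := rootEdges n j) (fun p _ => hnonneg (x p.1) (x p.2))
    (fun p _ => hle_one (x p.1) (x p.2))
  linarith

/-- **Corollary 3.4 (alternating sign property).** For a non-negative pair potential
(`-1 ≤ f ≤ 0`), `ψ_{n,n+k} = (-1)^k |ψ_{n,n+k}|`. -/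
theorem statement11 {X : Type} (f : X → X → ℝ) (hsym : ∀ a b, f a b = f b a)
    (hfge : ∀ a b, (-1 : ℝ) ≤ f a b) (hfle : ∀ a b, f a b ≤ 0)
    (n k : ℕ) (hn : 1 ≤ n) (x : Fin (n + k) → X) :
    psi f n k x = (-1 : ℝ) ^ k * |psi f n k x| :=
  statement11_general f hfge hfle n k x

end
end

section
/- Let D_1 ⊆ ℝ^d be a finite union of bounded convex regular-closed sets and let D_2 ⊆ ℝ^d be a closed Euclidean ball of positive radius. Then the map r ↦ (V_r(D_1 ∪ D_2) − V_r(D_1)) / V_r(D_2) is monotonically decreasing on (0,∞). -/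
/-!
Write `N_r = cthickening r D₁` and `B_r = closedBall c (r + ρ)`. For `r > 0` the numerator is
`vol (B_r \ N_r)` and the denominator is `vol B_r`, so the ratio is the fraction of `B_r` left
uncovered by `N_r`. For `a ≤ b`, the homothety about `c` shrinking `B_b` onto `B_a` moves each
point by at most `b - a`, hence maps `B_b \ N_b` into `B_a \ N_a` while scaling every volume by
the same factor.
-/

open MeasureTheory
open scoped Classical

noncomputable section

/-- `V_r(D)`: the Lebesgue volume of the set of points `x` such that the closed ball
of radius `r` around `x` (i.e. `x + B̄_r(0)`) intersects `D`. -/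
def Vr {d : ℕ} (r : ℝ) (D : Set (EuclideanSpace ℝ (Fin d))) : ℝ :=
  (volume {x : EuclideanSpace ℝ (Fin d) | (Metric.closedBall x r ∩ D).Nonempty}).toReal

open Metric Set

theorem IsClosed.setOf_closedBall_inter_nonempty_eq_cthickening {α : Type*}
    [PseudoMetricSpace α] [ProperSpace α] {D : Set α} (hD : IsClosed D) {r : ℝ} (hr : 0 ≤ r) :
    {x | (closedBall x r ∩ D).Nonempty} = cthickening r D := by
  ext x
  simp only [mem_ofPred_eq, hD.cthickening_eq_biUnion_closedBall hr, mem_iUnion₂, exists_prop,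
    mem_closedBall, dist_comm x, Set.Nonempty, mem_inter_iff, and_comm]

section Homothety

variable {E : Type*} [NormedAddCommGroup E] [NormedSpace ℝ E]

theorem homothety_closedBall_sdiff_cthickening_subset (c : E) (D : Set E) {ρ a b : ℝ}
    (ha : 0 ≤ a) (hab : a ≤ b) (haρ : 0 < a + ρ) :
    AffineMap.homothety c ((a + ρ) / (b + ρ)) '' (closedBall c (b + ρ) \ cthickening b D) ⊆
      closedBall c (a + ρ) \ cthickening a D := by
  have hbρ : 0 < b + ρ := by linarith
  set t := (a + ρ) / (b + ρ)
  have ht₀ : 0 ≤ t := by positivity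
  have ht₁ : t ≤ 1 := div_le_one_of_le₀ (by linarith) hbρ.le
  have ht : t * (b + ρ) = a + ρ := div_mul_cancel₀ _ hbρ.ne'
  rintro _ ⟨x, ⟨hxB, hxN⟩, rfl⟩
  rw [mem_closedBall, dist_comm] at hxB
  refine ⟨?_, fun hyN => hxN ?_⟩
  · rw [mem_closedBall, dist_homothety_center, Real.norm_of_nonneg ht₀, ← ht]
    gcongr
  · have hmove : dist x (AffineMap.homothety c t x) ≤ b - a := by
      rw [dist_comm, dist_homothety_self, Real.norm_of_nonneg (by linarith)]
      nlinarith
    simpa using cthickening_cthickening_subset (by linarith) ha D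
      (mem_cthickening_of_dist_le _ _ _ _ hyN hmove)

end Homothety

section Haar

variable {E : Type*} [NormedAddCommGroup E] [NormedSpace ℝ E] [MeasurableSpace E] [BorelSpace E]
  [FiniteDimensional ℝ E] (μ : Measure E) [μ.IsAddHaarMeasure]

theorem addHaar_closedBall_sdiff_cthickening_mul_le (c : E) (D : Set E) {ρ a b : ℝ}
    (ha : 0 ≤ a) (hab : a ≤ b) (haρ : 0 < a + ρ) :
    μ (closedBall c (b + ρ) \ cthickening b D) * μ (closedBall c (a + ρ)) ≤
      μ (closedBall c (a + ρ) \ cthickening a D) * μ (closedBall c (b + ρ)) := by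
  have hbρ : 0 < b + ρ := by linarith
  set t := (a + ρ) / (b + ρ)
  have hball : μ (closedBall c (a + ρ)) =
      ENNReal.ofReal |t ^ Module.finrank ℝ E| * μ (closedBall c (b + ρ)) := by
    rw [μ.addHaar_closedBall' c haρ.le, μ.addHaar_closedBall' c hbρ.le, ← mul_assoc,
      ← ENNReal.ofReal_mul (by positivity), abs_of_nonneg (by positivity), ← mul_pow,
      div_mul_cancel₀ _ hbρ.ne']
  calc μ (closedBall c (b + ρ) \ cthickening b D) * μ (closedBall c (a + ρ))
      = μ (AffineMap.homothety c t '' (closedBall c (b + ρ) \ cthickening b D)) *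
          μ (closedBall c (b + ρ)) := by
        rw [hball, μ.addHaar_image_homothety]
        ring
    _ ≤ μ (closedBall c (a + ρ) \ cthickening a D) * μ (closedBall c (b + ρ)) := by
        gcongr
        exact homothety_closedBall_sdiff_cthickening_subset c D ha hab haρ

theorem antitoneOn_measureReal_closedBall_sdiff_cthickening_div (c : E) (D : Set E) {ρ : ℝ}
    (hρ : 0 ≤ ρ) :
    AntitoneOn (fun r => μ.real (closedBall c (r + ρ) \ cthickening r D) /
      μ.real (closedBall c (r + ρ))) (Ioi 0) := by
  intro a (ha : 0 < a) b (hb : 0 < b) hab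
  have hball_pos : ∀ r, 0 < r → 0 < μ.real (closedBall c (r + ρ)) := fun r hr =>
    ENNReal.toReal_pos (measure_closedBall_pos μ c (by linarith)).ne' measure_closedBall_lt_top.ne
  rw [div_le_div_iff₀ (hball_pos b hb) (hball_pos a ha)]
  simpa only [measureReal_def, ← ENNReal.toReal_mul] using
    ENNReal.toReal_mono
      (ENNReal.mul_ne_top (measure_ne_top_of_subset sdiff_subset measure_closedBall_lt_top.ne)
        measure_closedBall_lt_top.ne)
      (addHaar_closedBall_sdiff_cthickening_mul_le μ c D ha.le hab (by linarith))

end Haar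

section Vr

variable {d : ℕ}

theorem Vr_eq_volume_cthickening {r : ℝ} (hr : 0 ≤ r) {D : Set (EuclideanSpace ℝ (Fin d))}
    (hD : IsClosed D) : Vr r D = volume.real (cthickening r D) := by
  rw [Vr, hD.setOf_closedBall_inter_nonempty_eq_cthickening hr, measureReal_def]

theorem Vr_closedBall {r ρ : ℝ} (hr : 0 ≤ r) (hρ : 0 ≤ ρ) (c : EuclideanSpace ℝ (Fin d)) :
    Vr r (closedBall c ρ) = volume.real (closedBall c (r + ρ)) := by
  rw [Vr_eq_volume_cthickening hr isClosed_closedBall, cthickening_closedBall hr hρ]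

theorem Vr_union_closedBall_sub_Vr {r ρ : ℝ} (hr : 0 ≤ r) (hρ : 0 ≤ ρ)
    {D : Set (EuclideanSpace ℝ (Fin d))} (hD : IsCompact D) (c : EuclideanSpace ℝ (Fin d)) :
    Vr r (D ∪ closedBall c ρ) - Vr r D = volume.real (closedBall c (r + ρ) \ cthickening r D) := by
  rw [Vr_eq_volume_cthickening hr (hD.isClosed.union isClosed_closedBall),
    Vr_eq_volume_cthickening hr hD.isClosed, cthickening_union, cthickening_closedBall hr hρ,
    union_comm, measureReal_sdiff' isClosed_cthickening.measurableSet
      measure_closedBall_lt_top.ne hD.cthickening.measure_lt_top.ne]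

end Vr

/-- **Lemma 4.4.** If `D₁ ⊆ ℝ^d` is a finite union of bounded convex regular-closed
sets and `D₂` is a closed Euclidean ball of positive radius, then
`r ↦ (V_r(D₁ ∪ D₂) − V_r(D₁)) / V_r(D₂)` is monotonically decreasing on `(0,∞)`. -/
theorem statement18 (d : ℕ) (D₁ D₂ : Set (EuclideanSpace ℝ (Fin d)))
    (hD₁ : ∃ (m : ℕ) (A : Fin m → Set (EuclideanSpace ℝ (Fin d))),
      D₁ = ⋃ i, A i ∧ ∀ i, Convex ℝ (A i) ∧ Bornology.IsBounded (A i) ∧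
        closure (interior (A i)) = A i)
    (hD₂ : ∃ (c : EuclideanSpace ℝ (Fin d)) (ρ : ℝ), 0 < ρ ∧
      D₂ = Metric.closedBall c ρ) :
    AntitoneOn (fun r => (Vr r (D₁ ∪ D₂) - Vr r D₁) / Vr r D₂) (Set.Ioi (0 : ℝ)) := by
  obtain ⟨c, ρ, hρ, rfl⟩ := hD₂
  have hD₁_compact : IsCompact D₁ := by
    obtain ⟨m, A, rfl, hA⟩ := hD₁
    exact isCompact_iUnion fun i =>
      isCompact_of_isClosed_isBounded ((hA i).2.2 ▸ isClosed_closure) (hA i).2.1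
  refine (antitoneOn_measureReal_closedBall_sdiff_cthickening_div volume c D₁ hρ.le).congr
    fun r (hr : 0 < r) => ?_
  rw [Vr_union_closedBall_sub_Vr hr.le hρ.le hD₁_compact, Vr_closedBall hr.le hρ.le]

end
end
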